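/- arXiv:2509.17590 — 2 statements merged into one kernel-verified Lean document; each statement's English description precedes it below -/
import Mathlib

section
/- E[(‖S_n‖ − μ̂ᵀS_n)^2]/n → 0 as n → ∞; that is, (‖S_n‖ − μ̂ᵀS_n)/√n → 0 in L^2. -/
open MeasureTheory ProbabilityTheory Filter Finset Metric
open scoped ENNReal RealInnerProductSpace Topology

/-!
Write `S n = (n ‖a‖) • â + T n` with `T n` the centred walk. The defect `‖v‖ - ⟪â, v⟫` is
`2`-Lipschitz in `v` and at most `4 ‖p‖² / N` at `v = N • â + p`. Truncating the centred steps
splits `T n = P n + Q n` into a sum of bounded centred i.i.d. vectors and a sum of centred i.i.d.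
vectors of second moment at most `δ`, so that the squared defect is at most
`32 ‖P n‖⁴ / (n ‖a‖)² + 8 ‖Q n‖²`. Independence gives `E ‖P n‖⁴ = O(n²)` and `E ‖Q n‖² ≤ n δ`,
hence `E[(‖S n‖ - ⟪â, S n⟫)²] ≤ n δ + O(1)` for every `δ > 0`.
-/

section Geometry

variable {E : Type*} [NormedAddCommGroup E] [InnerProductSpace ℝ E]

lemma norm_add_sub_inner_add_le {e : E} (he : ‖e‖ ≤ 1) (v q : E) :
    ‖v + q‖ - ⟪e, v + q⟫ ≤ ‖v‖ - ⟪e, v⟫ + 2 * ‖q‖ := by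
  have hq : -⟪e, q⟫ ≤ ‖q‖ := (neg_le_abs _).trans
    ((abs_real_inner_le_norm e q).trans (mul_le_of_le_one_left (norm_nonneg q) he))
  rw [inner_add_right]
  linarith [norm_add_le v q]

lemma norm_smul_add_sub_inner_le {e : E} (he : ‖e‖ = 1) {N : ℝ} (hN : 0 < N) (p : E) :
    ‖N • e + p‖ - ⟪e, N • e + p⟫ ≤ 4 * ‖p‖ ^ 2 / N := by
  set u := ⟪e, p⟫
  have hu : |u| ≤ ‖p‖ := by simpa [he] using abs_real_inner_le_norm e p
  have hx : ⟪e, N • e + p⟫ = N + u := by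
    rw [inner_add_right, real_inner_smul_right, real_inner_self_eq_norm_sq, he]; ring
  have hs2 : ‖N • e + p‖ ^ 2 = N ^ 2 + 2 * N * u + ‖p‖ ^ 2 := by
    rw [← real_inner_self_eq_norm_sq, real_inner_add_add_self, real_inner_smul_left,
      real_inner_smul_right, real_inner_smul_left, real_inner_self_eq_norm_sq,
      real_inner_self_eq_norm_sq, he]; ring
  have hs : ‖N • e + p‖ ≤ N + ‖p‖ := by
    simpa [norm_smul, he, abs_of_pos hN] using norm_add_le (N • e) p
  have hxs : N + u ≤ ‖N • e + p‖ := by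
    simpa [hx, he] using real_inner_le_norm e (N • e + p)
  rw [hx, le_div_iff₀ hN]
  rcases abs_le.1 hu with ⟨hu₁, hu₂⟩
  -- With `s = N • e + p`: `(‖s‖ - ⟪e, s⟫) (‖s‖ + ⟪e, s⟫) = ‖p‖² - u²` and `‖s‖ + ⟪e, s⟫ ≥ N`
  -- when `2 ‖p‖ < N`; otherwise the defect is at most `2 ‖p‖ ≤ 4 ‖p‖² / N`.
  by_cases hp : N ≤ 2 * ‖p‖
  · nlinarith
  · nlinarith [norm_nonneg (N • e + p)]

lemma sq_norm_smul_add_sub_inner_le {e : E} (he : ‖e‖ = 1) {N : ℝ} (hN : 0 < N) (p q : E) :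
    (‖N • e + (p + q)‖ - ⟪e, N • e + (p + q)⟫) ^ 2 ≤ 32 * ‖p‖ ^ 4 / N ^ 2 + 8 * ‖q‖ ^ 2 := by
  have hD₀ : 0 ≤ ‖N • e + (p + q)‖ - ⟪e, N • e + (p + q)⟫ := by
    simpa [he] using real_inner_le_norm e (N • e + (p + q))
  have hD : ‖N • e + (p + q)‖ - ⟪e, N • e + (p + q)⟫ ≤ 4 * ‖p‖ ^ 2 / N + 2 * ‖q‖ := by
    rw [← add_assoc]
    linarith [norm_add_sub_inner_add_le he.le (N • e + p) q, norm_smul_add_sub_inner_le he hN p]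
  calc _ ≤ (4 * ‖p‖ ^ 2 / N + 2 * ‖q‖) ^ 2 := pow_le_pow_left₀ hD₀ hD 2
    _ ≤ 2 * ((4 * ‖p‖ ^ 2 / N) ^ 2 + (2 * ‖q‖) ^ 2) := add_sq_le
    _ = 32 * ‖p‖ ^ 4 / N ^ 2 + 8 * ‖q‖ ^ 2 := by ring

end Geometry

lemma eventually_indicator_closedBall_eq_self {E : Type*} [NormedAddCommGroup E] (v : E) :
    ∀ᶠ j : ℕ in atTop, (closedBall (0 : E) j).indicator id v = v := by
  filter_upwards [tendsto_natCast_atTop_atTop.eventually_ge_atTop ‖v‖] with j hj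
  simp [Set.indicator_of_mem, hj]

lemma tendsto_div_natCast_of_le_mul_add {x : ℕ → ℝ} (hx : ∀ n, 0 ≤ x n)
    (h : ∀ δ > 0, ∃ C, ∀ n : ℕ, 0 < n → x n ≤ n * δ + C) :
    Tendsto (fun n => x n / n) atTop (𝓝 0) := by
  refine tendsto_order.2
    ⟨fun b hb => .of_forall fun n => hb.trans_le (div_nonneg (hx n) n.cast_nonneg), fun ε hε => ?_⟩
  obtain ⟨C, hC⟩ := h (ε / 2) (half_pos hε)
  filter_upwards [eventually_gt_atTop 0,
    (tendsto_const_div_atTop_nhds_zero_nat C).eventually_lt_const (half_pos hε)] with n hn hCn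
  have hn' : (0 : ℝ) < n := by exact_mod_cast hn
  calc x n / n ≤ (n * (ε / 2) + C) / n := by gcongr; exact hC n hn
    _ = ε / 2 + C / n := by field_simp
    _ < ε := by linarith

section Probability

variable {Ω : Type*} [MeasurableSpace Ω] {μ : Measure Ω}

lemma integral_sq_norm_smul_add_sub_inner_le {E : Type*} [NormedAddCommGroup E]
    [InnerProductSpace ℝ E] {e : E} (he : ‖e‖ = 1) {N : ℝ} (hN : 0 < N) {P Q : Ω → E}
    (hP : Integrable (fun ω => ‖P ω‖ ^ 4) μ) (hQ : Integrable (fun ω => ‖Q ω‖ ^ 2) μ) :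
    ∫ ω, (‖N • e + (P ω + Q ω)‖ - ⟪e, N • e + (P ω + Q ω)⟫) ^ 2 ∂μ
      ≤ 32 * (∫ ω, ‖P ω‖ ^ 4 ∂μ) / N ^ 2 + 8 * ∫ ω, ‖Q ω‖ ^ 2 ∂μ := by
  calc _ ≤ ∫ ω, (32 / N ^ 2 * ‖P ω‖ ^ 4 + 8 * ‖Q ω‖ ^ 2) ∂μ :=
        integral_mono_of_nonneg (ae_of_all _ fun ω => sq_nonneg _)
          ((hP.const_mul _).add (hQ.const_mul _)) (ae_of_all _ fun ω =>
            (sq_norm_smul_add_sub_inner_le he hN (P ω) (Q ω)).trans_eq (by ring))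
    _ = _ := by
        rw [integral_add (hP.const_mul _) (hQ.const_mul _), integral_const_mul,
          integral_const_mul]
        ring

lemma EuclideanSpace.norm_pow_four_le {κ : Type*} [Fintype κ] (v : EuclideanSpace ℝ κ) :
    ‖v‖ ^ 4 ≤ Fintype.card κ * ∑ k, v k ^ 4 := by
  rw [show ‖v‖ ^ 4 = (‖v‖ ^ 2) ^ 2 by ring, EuclideanSpace.real_norm_sq_eq]
  have := sq_sum_le_card_mul_sum_sq (s := univ) (f := fun k => v k ^ 2)
  simpa [← pow_mul] using this

lemma EuclideanSpace.integral_apply_eq_zero {κ : Type*} [Fintype κ]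
    {f : Ω → EuclideanSpace ℝ κ} (hf : Integrable f μ) (h0 : ∫ ω, f ω ∂μ = 0) (k : κ) :
    ∫ ω, f ω k ∂μ = 0 :=
  ((EuclideanSpace.proj k).integral_comp_comm hf).trans (by simp [h0])

lemma integral_finsetSum_apply_eq_zero {ι E : Type*} [NormedAddCommGroup E] [NormedSpace ℝ E]
    {f : ι → Ω → E} (hf : ∀ i, Integrable (f i) μ) (h0 : ∀ i, ∫ ω, f i ω ∂μ = 0)
    (s : Finset ι) : ∫ ω, (∑ i ∈ s, f i) ω ∂μ = 0 := by
  simp_rw [Finset.sum_apply]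
  rw [integral_finsetSum _ fun i _ => hf i]
  simp [h0]

lemma tendsto_integral_indicator_closedBall {E : Type*} [NormedAddCommGroup E]
    [NormedSpace ℝ E] [CompleteSpace E] [MeasurableSpace E] [BorelSpace E]
    [SecondCountableTopology E] {X : Ω → E} (hX : Integrable X μ) :
    Tendsto (fun j : ℕ => ∫ ω, (closedBall (0 : E) j).indicator id (X ω) ∂μ) atTop
      (𝓝 (∫ ω, X ω ∂μ)) :=
  tendsto_integral_of_dominated_convergence _
    (fun _ => ((measurable_id.indicator measurableSet_closedBall).comp_aemeasurable
      hX.aestronglyMeasurable.aemeasurable).aestronglyMeasurable)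
    hX.norm (fun _ => ae_of_all _ fun _ => norm_indicator_le_norm_self _ _)
    (ae_of_all _ fun ω => tendsto_const_nhds.congr' <|
      (eventually_indicator_closedBall_eq_self (X ω)).mono fun _ hj => hj.symm)

variable [IsProbabilityMeasure μ]

lemma MeasureTheory.MemLp.integrable_pow_of_le {f : Ω → ℝ} {p : ℝ≥0∞} {k : ℕ}
    (hf : MemLp f p μ) (hk : (k : ℝ≥0∞) ≤ p) :
    Integrable (fun ω => f ω ^ k) μ := by
  refine (integrable_norm_iff ?_).1 ?_
  · exact (hf.aestronglyMeasurable.pow k)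
  · simpa [norm_pow] using (hf.mono_exponent hk).integrable_norm_pow'

lemma integral_pow_le_of_abs_le {f : Ω → ℝ} {B : ℝ} (hB : ∀ ω, |f ω| ≤ B) (k : ℕ) :
    ∫ ω, f ω ^ k ∂μ ≤ B ^ k := by
  have hbound : ∀ᵐ ω ∂μ, ‖f ω ^ k‖ ≤ B ^ k := ae_of_all _ fun ω => by
    rw [norm_pow, Real.norm_eq_abs]
    exact pow_le_pow_left₀ (abs_nonneg _) (hB ω) k
  simpa using (le_abs_self _).trans (norm_integral_le_of_norm_le_const hbound)

lemma integral_sum_sq_of_iIndepFun {ι : Type*} {ξ : ι → Ω → ℝ} (hindep : iIndepFun ξ μ)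
    (h2 : ∀ i, MemLp (ξ i) 2 μ) (h0 : ∀ i, ∫ ω, ξ i ω ∂μ = 0) (s : Finset ι) :
    ∫ ω, (∑ i ∈ s, ξ i ω) ^ 2 ∂μ = ∑ i ∈ s, ∫ ω, ξ i ω ^ 2 ∂μ := by
  have hsum0 := integral_finsetSum_apply_eq_zero (fun i => (h2 i).integrable one_le_two) h0 s
  calc ∫ ω, (∑ i ∈ s, ξ i ω) ^ 2 ∂μ = variance (∑ i ∈ s, ξ i) μ := by
        rw [variance_of_integral_eq_zero (memLp_finsetSum' s fun i _ => h2 i).aemeasurable hsum0]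
        simp only [Finset.sum_apply]
    _ = ∑ i ∈ s, variance (ξ i) μ :=
        IndepFun.variance_sum (fun i _ => h2 i) fun i _ j _ hij => hindep.indepFun hij
    _ = ∑ i ∈ s, ∫ ω, ξ i ω ^ 2 ∂μ :=
        sum_congr rfl fun i _ => variance_of_integral_eq_zero (h2 i).aemeasurable (h0 i)

lemma integral_add_pow_four_of_indepFun {s x : Ω → ℝ} (hsx : IndepFun s x μ)
    (hs : MemLp s 4 μ) (hx : MemLp x 4 μ) (hs0 : ∫ ω, s ω ∂μ = 0) (hx0 : ∫ ω, x ω ∂μ = 0) :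
    ∫ ω, (s ω + x ω) ^ 4 ∂μ =
      ∫ ω, s ω ^ 4 ∂μ + 6 * ((∫ ω, s ω ^ 2 ∂μ) * ∫ ω, x ω ^ 2 ∂μ) + ∫ ω, x ω ^ 4 ∂μ := by
  have hmoment (k j : ℕ) :
      ∫ ω, s ω ^ k * x ω ^ j ∂μ = (∫ ω, s ω ^ k ∂μ) * ∫ ω, x ω ^ j ∂μ :=
    (hsx.comp (measurable_id.pow_const k) (measurable_id.pow_const j)).integral_mul_eq_mul_integral
      (hs.aestronglyMeasurable.pow k) (hx.aestronglyMeasurable.pow j)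
  have hint (k j : ℕ) (hk : k ≤ 4) (hj : j ≤ 4) :
      Integrable (fun ω => s ω ^ k * x ω ^ j) μ :=
    (hsx.comp (measurable_id.pow_const k) (measurable_id.pow_const j)).integrable_mul
      (hs.integrable_pow_of_le (by exact_mod_cast hk))
      (hx.integrable_pow_of_le (by exact_mod_cast hj))
  have hexpand : ∀ ω, (s ω + x ω) ^ 4 = s ω ^ 4 * x ω ^ 0 + 4 * (s ω ^ 3 * x ω ^ 1)
      + 6 * (s ω ^ 2 * x ω ^ 2) + 4 * (s ω ^ 1 * x ω ^ 3) + s ω ^ 0 * x ω ^ 4 := fun ω => by ring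
  simp_rw [hexpand]
  rw [integral_add, integral_add, integral_add, integral_add, integral_const_mul,
    integral_const_mul, integral_const_mul]
  · simp only [hmoment]
    simp [hs0, hx0]
  all_goals
    repeat first
      | exact hint _ _ (by norm_num) (by norm_num)
      | exact (hint _ _ (by norm_num) (by norm_num)).const_mul _
      | refine Integrable.add ?_ ?_

lemma integral_sum_pow_four_le {ξ : ℕ → Ω → ℝ} (hindep : iIndepFun ξ μ)
    (h4 : ∀ i, MemLp (ξ i) 4 μ) (h0 : ∀ i, ∫ ω, ξ i ω ∂μ = 0) {σ2 M : ℝ}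
    (hσ2 : ∀ i, ∫ ω, ξ i ω ^ 2 ∂μ ≤ σ2) (hM : ∀ i, ∫ ω, ξ i ω ^ 4 ∂μ ≤ M) (n : ℕ) :
    ∫ ω, (∑ i ∈ range n, ξ i ω) ^ 4 ∂μ ≤ n * M + 3 * n ^ 2 * σ2 ^ 2 := by
  have h2 (i : ℕ) : MemLp (ξ i) 2 μ := (h4 i).mono_exponent (by norm_num)
  induction n with
  | zero => simp
  | succ n ih =>
    have hindep_n : IndepFun (∑ i ∈ range n, ξ i) (ξ n) μ :=
      hindep.indepFun_finsetSum_of_notMem₀ (fun i => (h4 i).aemeasurable) notMem_range_self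
    have hsum_sq : ∫ ω, (∑ i ∈ range n, ξ i ω) ^ 2 ∂μ ≤ n * σ2 := by
      rw [integral_sum_sq_of_iIndepFun hindep h2 h0]
      simpa using Finset.sum_le_sum fun i (_ : i ∈ range n) => hσ2 i
    have hstep := integral_add_pow_four_of_indepFun hindep_n (memLp_finsetSum' _ fun i _ => h4 i)
      (h4 n) (integral_finsetSum_apply_eq_zero (fun i => (h2 i).integrable one_le_two) h0 _)
      (h0 n)
    simp only [Finset.sum_apply] at hstep
    simp_rw [Finset.sum_range_succ, hstep]
    have hσ2_nonneg : 0 ≤ σ2 := (integral_nonneg fun ω => sq_nonneg (ξ 0 ω)).trans (hσ2 0)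
    have hx2 : 0 ≤ ∫ ω, ξ n ω ^ 2 ∂μ := integral_nonneg fun ω => sq_nonneg _
    have hs2 : 0 ≤ ∫ ω, (∑ i ∈ range n, ξ i ω) ^ 2 ∂μ := integral_nonneg fun ω => sq_nonneg _
    push_cast
    nlinarith [mul_le_mul hsum_sq (hσ2 n) hx2 (by positivity), hM n]

section Euclidean

variable {κ : Type*} [Fintype κ]

lemma integral_norm_sum_sq_of_iIndepFun {ι : Type*} {W : ι → Ω → EuclideanSpace ℝ κ}
    (hindep : iIndepFun W μ) (h2 : ∀ i, MemLp (W i) 2 μ) (h0 : ∀ i, ∫ ω, W i ω ∂μ = 0)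
    (s : Finset ι) :
    ∫ ω, ‖∑ i ∈ s, W i ω‖ ^ 2 ∂μ = ∑ i ∈ s, ∫ ω, ‖W i ω‖ ^ 2 ∂μ := by
  have h2k (i : ι) (k : κ) : MemLp (fun ω => W i ω k) 2 μ :=
    (h2 i).continuousLinearMap_comp (EuclideanSpace.proj (𝕜 := ℝ) k)
  have hcoord (k : κ) :
      ∫ ω, (∑ i ∈ s, W i ω k) ^ 2 ∂μ = ∑ i ∈ s, ∫ ω, W i ω k ^ 2 ∂μ :=
    integral_sum_sq_of_iIndepFun
      (hindep.comp _ fun _ => (EuclideanSpace.proj (𝕜 := ℝ) k).continuous.measurable) (h2k · k)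
      (fun i => EuclideanSpace.integral_apply_eq_zero ((h2 i).integrable one_le_two) (h0 i) k) s
  simp_rw [EuclideanSpace.real_norm_sq_eq]
  rw [integral_finsetSum _ fun k _ => ?_]
  · simp only [WithLp.ofLp_sum, Finset.sum_apply, hcoord]
    rw [Finset.sum_comm]
    refine Finset.sum_congr rfl fun i _ => ?_
    rw [integral_finsetSum _ fun k _ => (h2k i k).integrable_sq]
  · simpa using ((memLp_finsetSum' s fun i _ => h2 i).continuousLinearMap_comp
      (EuclideanSpace.proj (𝕜 := ℝ) k)).integrable_sq

lemma integral_norm_sum_pow_four_le {W : ℕ → Ω → EuclideanSpace ℝ κ}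
    (hmeas : ∀ i, AEStronglyMeasurable (W i) μ) (hindep : iIndepFun W μ) {B : ℝ}
    (hB : ∀ i ω, ‖W i ω‖ ≤ B) (h0 : ∀ i, ∫ ω, W i ω ∂μ = 0) (n : ℕ) :
    ∫ ω, ‖∑ i ∈ range n, W i ω‖ ^ 4 ∂μ ≤ 4 * Fintype.card κ ^ 2 * n ^ 2 * B ^ 4 := by
  have h4 (i : ℕ) : MemLp (W i) 4 μ := MemLp.of_bound (hmeas i) B (ae_of_all _ (hB i))
  have h4k (i : ℕ) (k : κ) : MemLp (fun ω => W i ω k) 4 μ :=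
    (h4 i).continuousLinearMap_comp (EuclideanSpace.proj (𝕜 := ℝ) k)
  have hBk (i : ℕ) (k : κ) (ω : Ω) : |W i ω k| ≤ B := (PiLp.norm_apply_le _ k).trans (hB i ω)
  have hcoord (k : κ) :
      ∫ ω, (∑ i ∈ range n, W i ω k) ^ 4 ∂μ ≤ n * B ^ 4 + 3 * n ^ 2 * (B ^ 2) ^ 2 :=
    integral_sum_pow_four_le
      (hindep.comp _ fun _ => (EuclideanSpace.proj (𝕜 := ℝ) k).continuous.measurable) (h4k · k)
      (fun i => EuclideanSpace.integral_apply_eq_zero ((h4 i).integrable (by norm_num)) (h0 i) k)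
      (fun i => integral_pow_le_of_abs_le (hBk i k) 2)
      (fun i => integral_pow_le_of_abs_le (hBk i k) 4) n
  have hsum4k (k : κ) : Integrable (fun ω => (∑ i ∈ range n, W i ω k) ^ 4) μ := by
    simpa using (memLp_finsetSum' _ fun i _ => h4k i k).integrable_pow_of_le le_rfl
  calc ∫ ω, ‖∑ i ∈ range n, W i ω‖ ^ 4 ∂μ
      ≤ ∫ ω, Fintype.card κ * ∑ k, (∑ i ∈ range n, W i ω k) ^ 4 ∂μ := by
        refine integral_mono ?_ ((integrable_finsetSum _ fun k _ => hsum4k k).const_mul _)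
          fun ω => by simpa using EuclideanSpace.norm_pow_four_le (∑ i ∈ range n, W i ω)
        simpa using (memLp_finsetSum' _ fun i _ => h4 i).integrable_norm_pow'
    _ = Fintype.card κ * ∑ k, ∫ ω, (∑ i ∈ range n, W i ω k) ^ 4 ∂μ := by
        rw [integral_const_mul, integral_finsetSum _ fun k _ => hsum4k k]
    _ ≤ Fintype.card κ * ∑ _k : κ, (n * B ^ 4 + 3 * n ^ 2 * (B ^ 2) ^ 2) := by
        gcongr with k; exact hcoord k
    _ ≤ 4 * Fintype.card κ ^ 2 * n ^ 2 * B ^ 4 := by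
        have hn : (n : ℝ) ≤ n ^ 2 := by norm_cast; nlinarith
        simp only [sum_const, card_univ, nsmul_eq_mul]
        have hcB : (0 : ℝ) ≤ Fintype.card κ ^ 2 * B ^ 4 := by positivity
        nlinarith [mul_le_mul_of_nonneg_right hn hcB]

end Euclidean

section Truncation

variable {E : Type*} [NormedAddCommGroup E] [NormedSpace ℝ E] [CompleteSpace E]
  [MeasurableSpace E] [BorelSpace E] [SecondCountableTopology E]

lemma exists_bounded_centered_approx {X : Ω → E} (hX : MemLp X 2 μ) (hX0 : ∫ ω, X ω ∂μ = 0)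
    {δ : ℝ} (hδ : 0 < δ) :
    ∃ φ : E → E, Measurable φ ∧ (∃ K, ∀ v, ‖φ v‖ ≤ K) ∧ ∫ ω, φ (X ω) ∂μ = 0 ∧
      ∫ ω, ‖X ω - φ (X ω)‖ ^ 2 ∂μ < δ := by
  set t : ℕ → E → E := fun j => (closedBall (0 : E) j).indicator id
  set m : ℕ → E := fun j => ∫ ω, t j (X ω) ∂μ
  have hX1 : Integrable X μ := hX.integrable one_le_two
  have ht_meas (j : ℕ) : Measurable (t j) := measurable_id.indicator measurableSet_closedBall
  have htX (j : ℕ) : Integrable (fun ω => t j (X ω)) μ :=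
    hX1.norm.mono' ((ht_meas j).comp_aemeasurable hX1.aemeasurable).aestronglyMeasurable
      (ae_of_all _ fun ω => norm_indicator_le_norm_self _ _)
  have hm : Tendsto m atTop (𝓝 0) := hX0 ▸ tendsto_integral_indicator_closedBall hX1
  have hV : Tendsto (fun j => ∫ ω, ‖X ω - (t j (X ω) - m j)‖ ^ 2 ∂μ) atTop (𝓝 0) := by
    have hpoint (ω : Ω) : Tendsto (fun j => ‖X ω - (t j (X ω) - m j)‖ ^ 2) atTop (𝓝 0) := by
      have htail : Tendsto (fun j => X ω - t j (X ω)) atTop (𝓝 0) :=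
        tendsto_const_nhds.congr' <| (eventually_indicator_closedBall_eq_self (X ω)).mono
          fun j hj => by simp [t, hj]
      simpa [sub_sub_eq_add_sub, sub_add_eq_add_sub] using (htail.add hm).norm.pow 2
    have hdom (j : ℕ) (ω : Ω) :
        ‖‖X ω - (t j (X ω) - m j)‖ ^ 2‖ ≤ (‖X ω‖ + ∫ ω, ‖X ω‖ ∂μ) ^ 2 := by
      have htail : ‖X ω - t j (X ω)‖ ≤ ‖X ω‖ := by
        by_cases hv : X ω ∈ closedBall (0 : E) j <;> simp [t, hv]
      have hm_norm : ‖m j‖ ≤ ∫ ω, ‖X ω‖ ∂μ :=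
        norm_integral_le_of_norm_le hX1.norm (ae_of_all _ fun ω => norm_indicator_le_norm_self _ _)
      rw [norm_pow, norm_norm, ← sub_add]
      exact pow_le_pow_left₀ (norm_nonneg _) ((norm_add_le _ _).trans (add_le_add htail hm_norm)) 2
    simpa using tendsto_integral_of_dominated_convergence _
      (fun j => (hX1.sub ((htX j).sub (integrable_const _))).aestronglyMeasurable.norm.pow 2)
      (hX.norm.add (memLp_const _)).integrable_sq (fun j => ae_of_all _ (hdom j))
      (ae_of_all _ hpoint)
  obtain ⟨j, hj⟩ := (hV.eventually_lt_const hδ).exists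
  refine ⟨fun v => t j v - m j, (ht_meas j).sub_const _, ⟨j + ‖m j‖, fun v => ?_⟩, ?_, hj⟩
  · refine (norm_sub_le _ _).trans (add_le_add_left ?_ _)
    by_cases hv : v ∈ closedBall (0 : E) j <;> simp_all [t]
  · rw [integral_sub (htX j) (integrable_const _)]
    simp [m]

end Truncation

section RandomWalk

variable {κ : Type*} [Fintype κ] {Y : ℕ → Ω → EuclideanSpace ℝ κ}

lemma exists_truncation_decomposition (hindep : iIndepFun Y μ)
    (hident : ∀ i, IdentDistrib (Y i) (Y 0) μ μ) (hY : MemLp (Y 0) 2 μ)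
    (hY0 : ∫ ω, Y 0 ω ∂μ = 0) {δ : ℝ} (hδ : 0 < δ) :
    ∃ (U V : ℕ → Ω → EuclideanSpace ℝ κ) (C : ℝ), (∀ i ω, Y i ω = U i ω + V i ω) ∧
      (∀ n : ℕ, Integrable (fun ω => ‖∑ i ∈ range n, U i ω‖ ^ 4) μ ∧
        ∫ ω, ‖∑ i ∈ range n, U i ω‖ ^ 4 ∂μ ≤ C * n ^ 2) ∧
      (∀ n : ℕ, Integrable (fun ω => ‖∑ i ∈ range n, V i ω‖ ^ 2) μ ∧
        ∫ ω, ‖∑ i ∈ range n, V i ω‖ ^ 2 ∂μ ≤ n * δ) := by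
  obtain ⟨φ, hφ, ⟨K, hK⟩, hφ0, hφδ⟩ := exists_bounded_centered_approx hY hY0 hδ
  set U : ℕ → Ω → EuclideanSpace ℝ κ := fun i ω => φ (Y i ω)
  set V : ℕ → Ω → EuclideanSpace ℝ κ := fun i ω => Y i ω - φ (Y i ω)
  have hψ : Measurable fun v : EuclideanSpace ℝ κ => v - φ v := measurable_id.sub hφ
  have hU_ident (i : ℕ) : IdentDistrib (U i) (U 0) μ μ := (hident i).comp hφ
  have hV_ident (i : ℕ) : IdentDistrib (V i) (V 0) μ μ := (hident i).comp hψ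
  have hU_meas (i : ℕ) : AEStronglyMeasurable (U i) μ :=
    (hU_ident i).aemeasurable_fst.aestronglyMeasurable
  have hU_bound (i : ℕ) (ω : Ω) : ‖U i ω‖ ≤ K := hK _
  have hU4 (i : ℕ) : MemLp (U i) 4 μ := MemLp.of_bound (hU_meas i) K (ae_of_all _ (hU_bound i))
  have hV2 (i : ℕ) : MemLp (V i) 2 μ :=
    (hV_ident i).memLp_iff.2 (hY.sub ((hU4 0).mono_exponent (by norm_num)))
  have hU_mean (i : ℕ) : ∫ ω, U i ω ∂μ = 0 := (hU_ident i).integral_eq.trans hφ0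
  have hV_mean (i : ℕ) : ∫ ω, V i ω ∂μ = 0 := by
    rw [(hV_ident i).integral_eq,
      integral_sub (hY.integrable one_le_two) ((hU4 0).integrable (by norm_num)), hY0, hφ0,
      sub_zero]
  refine ⟨U, V, 4 * Fintype.card κ ^ 2 * K ^ 4, fun i ω => (add_sub_cancel _ _).symm,
    fun n => ⟨(memLp_finsetSum _ fun i _ => hU4 i).integrable_norm_pow', ?_⟩,
    fun n => ⟨(memLp_finsetSum _ fun i _ => hV2 i).integrable_norm_pow', ?_⟩⟩
  · convert integral_norm_sum_pow_four_le (W := U) hU_meas (hindep.comp _ fun _ => hφ)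
      hU_bound hU_mean n using 1
    ring
  · rw [integral_norm_sum_sq_of_iIndepFun (W := V) (hindep.comp _ fun _ => hψ) hV2 hV_mean]
    simpa using sum_le_sum fun i (_ : i ∈ range n) =>
      ((hV_ident i).comp (measurable_norm.pow_const 2)).integral_eq.trans_le hφδ.le

lemma exists_integral_sq_norm_sub_inner_le (hindep : iIndepFun Y μ)
    (hident : ∀ i, IdentDistrib (Y i) (Y 0) μ μ) (hY : MemLp (Y 0) 2 μ)
    (hY0 : ∫ ω, Y 0 ω ∂μ = 0) {e : EuclideanSpace ℝ κ} (he : ‖e‖ = 1) {c : ℝ} (hc : 0 < c)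
    {δ : ℝ} (hδ : 0 < δ) :
    ∃ C, ∀ n : ℕ, 0 < n →
      ∫ ω, (‖(n * c) • e + ∑ i ∈ range n, Y i ω‖
        - ⟪e, (n * c) • e + ∑ i ∈ range n, Y i ω⟫) ^ 2 ∂μ ≤ n * δ + C := by
  obtain ⟨U, V, C, hYUV, hU, hV⟩ :=
    exists_truncation_decomposition hindep hident hY hY0 (by positivity : 0 < δ / 8)
  refine ⟨32 * C / c ^ 2, fun n hn => ?_⟩
  have hn' : (0 : ℝ) < n := by exact_mod_cast hn
  simp_rw [hYUV, sum_add_distrib]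
  refine (integral_sq_norm_smul_add_sub_inner_le he (by positivity) (hU n).1 (hV n).1).trans ?_
  have hU_term : 32 * (∫ ω, ‖∑ i ∈ range n, U i ω‖ ^ 4 ∂μ) / (n * c) ^ 2 ≤ 32 * C / c ^ 2 :=
    calc _ ≤ 32 * (C * n ^ 2) / (n * c) ^ 2 := by gcongr; exact (hU n).2
      _ = 32 * C / c ^ 2 := by field_simp
  linarith [(hV n).2]

end RandomWalk

end Probability

/-- For an i.i.d. planar random walk with `E[‖Z‖²] < ∞` and nonzero
mean vector `a`, setting `â := a/‖a‖`, we have `E[(‖S n‖ − âᵀ S n)²]/n → 0`. -/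
theorem norm_minus_projection_L2
    {Ω : Type*} [MeasurableSpace Ω] (μ : Measure Ω) [IsProbabilityMeasure μ]
    (Z : ℕ → Ω → EuclideanSpace ℝ (Fin 2))
    (hmeas : ∀ i, Measurable (Z i))
    (hindep : iIndepFun Z μ)
    (hident : ∀ i, IdentDistrib (Z i) (Z 0) μ μ)
    (hL2 : Integrable (fun ω => ‖Z 0 ω‖ ^ 2) μ)
    (a : EuclideanSpace ℝ (Fin 2)) (ha : a = ∫ ω, Z 0 ω ∂μ) (ha0 : a ≠ 0)
    (ahat : EuclideanSpace ℝ (Fin 2)) (hahat : ahat = ‖a‖⁻¹ • a)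
    (S : ℕ → Ω → EuclideanSpace ℝ (Fin 2))
    (hS : ∀ n ω, S n ω = ∑ i ∈ Finset.range n, Z i ω) :
    Tendsto (fun n : ℕ => (∫ ω, (‖S n ω‖ - (inner ℝ ahat (S n ω) : ℝ)) ^ 2 ∂μ) / n)
      atTop (nhds 0) := by
  have hnorm : 0 < ‖a‖ := norm_pos_iff.2 ha0
  have hcenter : Measurable fun v : EuclideanSpace ℝ (Fin 2) => v - a := measurable_id.sub_const a
  have hZ0 : MemLp (Z 0) 2 μ :=
    (memLp_two_iff_integrable_sq_norm (hmeas 0).aestronglyMeasurable).2 hL2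
  have hY0 : ∫ ω, Z 0 ω - a ∂μ = 0 := by
    rw [integral_sub (hZ0.integrable one_le_two) (integrable_const a), ← ha]
    simp
  have hahat_norm : ‖ahat‖ = 1 := by
    rw [hahat, norm_smul, norm_inv, norm_norm, inv_mul_cancel₀ hnorm.ne']
  have hS_eq (n : ℕ) (ω : Ω) : S n ω = (n * ‖a‖) • ahat + ∑ i ∈ range n, (Z i ω - a) := by
    rw [hS, hahat, smul_smul, mul_assoc, mul_inv_cancel₀ hnorm.ne', mul_one, sum_sub_distrib,
      sum_const, card_range, Nat.cast_smul_eq_nsmul]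
    abel
  simp_rw [hS_eq]
  refine tendsto_div_natCast_of_le_mul_add (fun n => integral_nonneg fun ω => sq_nonneg _)
    fun δ hδ => ?_
  exact exists_integral_sq_norm_sub_inner_le (hindep.comp _ fun _ => hcenter)
    (fun i => (hident i).comp hcenter) (hZ0.sub (memLp_const a)) hY0 hahat_norm hnorm hδ
end

section
/- Let u_1, …, u_m ∈ ℝ² with m ≥ 3 be pairwise distinct points, each of which is an extreme point of C := conv{u_1, …, u_m}, and let A := {(i, j) : 1 ≤ i < j ≤ m, ‖u_i − u_j‖ = diam C}. Then there exist constants B, δ_0 ∈ (0, ∞) such that for every δ ∈ (0, δ_0) and every pair x, y ∈ C with ‖x − y‖ > diam C − δ, there exists (i, j) ∈ A such that either max(‖x − u_i‖, ‖y − u_j‖) < Bδ or max(‖y − u_i‖, ‖x − u_j‖) < Bδ. -/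
/-!
Let `D` be the diameter and `2c` the least distance between two vertices. If `‖p - q‖ = D` for
vertices `p, q`, every vertex `z` has `‖z - q‖ ≤ D`, whence `⟪p - q, z - p⟫ ≤ -‖z - p‖² / 2 ≤
-c ‖z - p‖`; this inequality is convex in `z`, so the whole hull lies in the cone
`⟪p - q, x - p⟫ ≤ -c ‖x - p‖`. Expanding `‖x - y‖²` around `p - q` then gives
`‖x - y‖² ≤ D² - c (‖x - p‖ + ‖y - q‖)` as soon as `‖x - p‖ + ‖y - q‖ < c`, and so
`D - ‖x - y‖ < δ` forces `‖x - p‖ + ‖y - q‖ < 2Dδ / c`.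

That a near-diametral pair `x, y` is within `c` of some diametral pair of vertices is a compactness
argument: two points of the hull at distance exactly `D` are extreme points of it, since the
Euclidean ball is strictly convex, hence they are vertices.
-/

open Metric RealInnerProductSpace Set

theorem Set.Finite.exists_pos_forall_le_dist {X : Type*} [MetricSpace X] {s : Set X}
    (hs : s.Finite) : ∃ c > 0, ∀ x ∈ s, ∀ y ∈ s, x ≠ y → c ≤ dist x y := by
  obtain ⟨c, hc, hle⟩ := (hs.offDiag.isCompact).exists_forall_le'
    (continuous_dist.continuousOn) (a := 0) fun z hz => dist_pos.2 hz.2.2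
  exact ⟨c, hc, fun x hx y hy hxy => hle (x, y) ⟨hx, hy, hxy⟩⟩

theorem IsCompact.exists_pos_forall_lt_imp_mem {X : Type*} [TopologicalSpace X] {K U : Set X}
    {f : X → ℝ} (hK : IsCompact K) (hf : ContinuousOn f K) (hU : IsOpen U)
    (hpos : ∀ z ∈ K, z ∉ U → 0 < f z) : ∃ η > 0, ∀ z ∈ K, f z < η → z ∈ U := by
  obtain ⟨η, hη, hle⟩ := (hK.diff hU).exists_forall_le' (hf.mono sdiff_subset) (a := 0)
    fun z hz => hpos z hz.1 hz.2
  exact ⟨η, hη, fun z hz hfz => by_contra fun hzU => (hle z ⟨hz, hzU⟩).not_gt hfz⟩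

section NormedSpace

variable {E : Type*} [NormedAddCommGroup E] [NormedSpace ℝ E] {s : Set E}

theorem norm_sub_le_diam_of_mem_convexHull (hs : Bornology.IsBounded s) {x y : E}
    (hx : x ∈ convexHull ℝ s) (hy : y ∈ convexHull ℝ s) : ‖x - y‖ ≤ diam s := by
  rw [← dist_eq_norm, ← convexHull_diam]
  exact dist_le_diam_of_mem (isBounded_convexHull.2 hs) hx hy

theorem mem_of_mem_convexHull_of_subset_closedBall [StrictConvexSpace ℝ E] {x y : E}
    (hx : x ∈ convexHull ℝ s) (hxy : x ≠ y) (hball : convexHull ℝ s ⊆ closedBall y (dist x y)) :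
    x ∈ s :=
  extremePoints_convexHull_subset <| inter_extremePoints_subset_extremePoints_of_subset hball
    ⟨hx, StrictConvexSpace.sphere_subset_extremePoints_closedBall y (dist_ne_zero.2 hxy) rfl⟩

theorem mem_of_norm_sub_eq_diam [StrictConvexSpace ℝ E] (hs : Bornology.IsBounded s)
    (hD : 0 < diam s) {x y : E} (hx : x ∈ convexHull ℝ s) (hy : y ∈ convexHull ℝ s)
    (hxy : ‖x - y‖ = diam s) : x ∈ s := by
  refine mem_of_mem_convexHull_of_subset_closedBall hx
    (fun h => hD.ne' (by rw [← hxy, h, sub_self, norm_zero])) fun z hz => ?_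
  rw [mem_closedBall, dist_eq_norm, dist_eq_norm, hxy]
  exact norm_sub_le_diam_of_mem_convexHull hs hz hy

end NormedSpace

section InnerProductSpace

variable {E : Type*} [NormedAddCommGroup E] [InnerProductSpace ℝ E] {s : Set E}

theorem inner_le_neg_half_norm_sq_of_norm_add_le {a b : E} (h : ‖a + b‖ ≤ ‖a‖) :
    ⟪a, b⟫ ≤ -(‖b‖ ^ 2 / 2) := by
  have := norm_add_sq_real a b
  nlinarith [norm_nonneg (a + b), norm_nonneg a]

theorem convexOn_inner_sub_add_mul_norm_sub (a p : E) {c : ℝ} (hc : 0 ≤ c) :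
    ConvexOn ℝ univ fun x : E => ⟪a, x - p⟫ + c * ‖x - p‖ := by
  refine (((innerSL ℝ a).toLinearMap.convexOn convex_univ).add
    (convexOn_univ_norm.smul hc)).translate_right (-p) |>.congr fun x _ => ?_
  simp [sub_eq_neg_add]

theorem inner_sub_add_mul_norm_sub_nonpos {p q x : E} {c : ℝ} (hc : 0 ≤ c)
    (hfar : ∀ z ∈ s, ‖z - q‖ ≤ ‖p - q‖) (hsep : ∀ z ∈ s, z ≠ p → 2 * c ≤ ‖z - p‖)
    (hx : x ∈ convexHull ℝ s) : ⟪p - q, x - p⟫ + c * ‖x - p‖ ≤ 0 := by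
  suffices hsub : s ⊆ {x ∈ univ | ⟪p - q, x - p⟫ + c * ‖x - p‖ ≤ 0} from
    (convexHull_min hsub ((convexOn_inner_sub_add_mul_norm_sub (p - q) p hc).convex_le 0) hx).2
  intro z hz
  refine ⟨mem_univ z, ?_⟩
  rcases eq_or_ne z p with rfl | hzp
  · simp
  have hcone : ⟪p - q, z - p⟫ ≤ -(‖z - p‖ ^ 2 / 2) :=
    inner_le_neg_half_norm_sq_of_norm_add_le (by simpa using hfar z hz)
  nlinarith [hsep z hz hzp, norm_nonneg (z - p)]

theorem norm_sub_sq_le_of_diametral {p q x y : E} {c : ℝ} (hc : 0 ≤ c)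
    (hp : p ∈ s) (hq : q ∈ s) (hdiam : ∀ z ∈ s, ∀ w ∈ s, ‖z - w‖ ≤ ‖p - q‖)
    (hsep : ∀ z ∈ s, ∀ w ∈ s, z ≠ w → 2 * c ≤ ‖z - w‖)
    (hx : x ∈ convexHull ℝ s) (hy : y ∈ convexHull ℝ s) :
    ‖x - y‖ ^ 2 ≤ ‖p - q‖ ^ 2 - 2 * c * (‖x - p‖ + ‖y - q‖) + (‖x - p‖ + ‖y - q‖) ^ 2 := by
  have hconex := inner_sub_add_mul_norm_sub_nonpos hc (fun z hz => hdiam z hz q hq)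
    (fun z hz => hsep z hz p hp) hx
  have hconey := inner_sub_add_mul_norm_sub_nonpos hc
    (fun z hz => (norm_sub_rev p q).symm ▸ hdiam z hz p hp) (fun z hz => hsep z hz q hq) hy
  have hsplit : x - y = (p - q) + ((x - p) - (y - q)) := by abel
  have hrest : ‖(x - p) - (y - q)‖ ≤ ‖x - p‖ + ‖y - q‖ := norm_sub_le _ _
  have hinner : ⟪p - q, (x - p) - (y - q)⟫ = ⟪p - q, x - p⟫ + ⟪q - p, y - q⟫ := by
    rw [inner_sub_right, sub_eq_add_neg, ← inner_neg_left, neg_sub]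
  rw [hsplit, norm_add_sq_real, hinner]
  nlinarith [norm_nonneg ((x - p) - (y - q))]

theorem exists_pos_forall_near_diametral_pair (hs : s.Finite) (hD : 0 < diam s) {c : ℝ}
    (hc : 0 < c) :
    ∃ η > 0, ∀ x ∈ convexHull ℝ s, ∀ y ∈ convexHull ℝ s, diam s - η < ‖x - y‖ →
      ∃ p ∈ s, ∃ q ∈ s, ‖p - q‖ = diam s ∧ ‖x - p‖ + ‖y - q‖ < c := by
  set T := {pq : E × E | pq.1 ∈ s ∧ pq.2 ∈ s ∧ ‖pq.1 - pq.2‖ = diam s}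
  set U := ⋃ pq ∈ T, {z : E × E | ‖z.1 - pq.1‖ + ‖z.2 - pq.2‖ < c}
  have hU : IsOpen U := isOpen_biUnion fun pq _ => isOpen_lt (by fun_prop) continuous_const
  have hpos : ∀ z ∈ (convexHull ℝ s) ×ˢ (convexHull ℝ s), z ∉ U → 0 < diam s - ‖z.1 - z.2‖ := by
    rintro ⟨x, y⟩ ⟨hx, hy⟩ hzU
    refine sub_pos.2 <| (norm_sub_le_diam_of_mem_convexHull hs.isBounded hx hy).lt_of_ne
      fun hxy => hzU <| mem_iUnion₂.2 ⟨(x, y), ⟨?_, ?_, hxy⟩, by simpa using hc⟩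
    · exact mem_of_norm_sub_eq_diam hs.isBounded hD hx hy hxy
    · exact mem_of_norm_sub_eq_diam hs.isBounded hD hy hx (by rwa [norm_sub_rev])
  obtain ⟨η, hη, hmem⟩ := ((hs.isCompact_convexHull ℝ).prod (hs.isCompact_convexHull ℝ)
    ).exists_pos_forall_lt_imp_mem (by fun_prop) hU hpos
  refine ⟨η, hη, fun x hx y hy hxy => ?_⟩
  obtain ⟨pq, ⟨hp, hq, hpq⟩, hnear⟩ := mem_iUnion₂.1 (hmem (x, y) ⟨hx, hy⟩ (by linarith))
  exact ⟨pq.1, hp, pq.2, hq, hpq, hnear⟩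

theorem exists_linear_bound_near_diametral_pair (hs : s.Finite) (hD : 0 < diam s) :
    ∃ B > 0, ∃ δ₀ > 0, ∀ δ < δ₀, ∀ x ∈ convexHull ℝ s, ∀ y ∈ convexHull ℝ s,
      diam s - δ < ‖x - y‖ → ∃ p ∈ s, ∃ q ∈ s, ‖p - q‖ = diam s ∧ ‖x - p‖ + ‖y - q‖ < B * δ := by
  obtain ⟨c, hc, hsep⟩ := hs.exists_pos_forall_le_dist
  have hsep' : ∀ z ∈ s, ∀ w ∈ s, z ≠ w → 2 * (c / 2) ≤ ‖z - w‖ := fun z hz w hw hzw => by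
    rw [mul_div_cancel₀ c two_ne_zero, ← dist_eq_norm]
    exact hsep z hz w hw hzw
  obtain ⟨η, hη, hnear⟩ := exists_pos_forall_near_diametral_pair hs hD (half_pos hc)
  refine ⟨2 * diam s / (c / 2), by positivity, η, hη, fun δ hδ x hx y hy hxy => ?_⟩
  obtain ⟨p, hp, q, hq, hpq, hclose⟩ := hnear x hx y hy (by linarith)
  have hdiam : ∀ z ∈ s, ∀ w ∈ s, ‖z - w‖ ≤ ‖p - q‖ := fun z hz w hw => by
    rw [hpq, ← dist_eq_norm]
    exact dist_le_diam_of_mem hs.isBounded hz hw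
  have hsq := norm_sub_sq_le_of_diametral (half_pos hc).le hp hq hdiam hsep' hx hy
  have hxyD := norm_sub_le_diam_of_mem_convexHull hs.isBounded hx hy
  rw [hpq] at hsq
  refine ⟨p, hp, q, hq, hpq, ?_⟩
  rw [div_mul_eq_mul_div, lt_div_iff₀ (half_pos hc)]
  have hS : 0 ≤ ‖x - p‖ + ‖y - q‖ := by positivity
  nlinarith [mul_le_mul_of_nonneg_left hclose.le hS, norm_nonneg (x - y)]

end InnerProductSpace

theorem near_diameter_points_near_diametrical_vertices_general
    (m : ℕ) (hm : 3 ≤ m)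
    (u : Fin m → EuclideanSpace ℝ (Fin 2))
    (hinj : Function.Injective u)
    (C : Set (EuclideanSpace ℝ (Fin 2)))
    (hC : C = convexHull ℝ (Set.range u)) :
    ∃ B δ₀ : ℝ, 0 < B ∧ 0 < δ₀ ∧
      ∀ δ : ℝ, 0 < δ → δ < δ₀ →
        ∀ x ∈ C, ∀ y ∈ C, Metric.diam C - δ < ‖x - y‖ →
          ∃ i j : Fin m, i < j ∧ ‖u i - u j‖ = Metric.diam C ∧
            (max ‖x - u i‖ ‖y - u j‖ < B * δ ∨
             max ‖y - u i‖ ‖x - u j‖ < B * δ) := by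
  have h01 : (⟨0, by omega⟩ : Fin m) ≠ ⟨1, by omega⟩ := by simp [Fin.ext_iff]
  have hD : 0 < diam (range u) := (dist_pos.2 (hinj.ne h01)).trans_le
    (dist_le_diam_of_mem (finite_range u).isBounded (mem_range_self _) (mem_range_self _))
  obtain ⟨B, hB, δ₀, hδ₀, hnear⟩ := exists_linear_bound_near_diametral_pair (finite_range u) hD
  subst hC
  rw [convexHull_diam]
  refine ⟨B, δ₀, hB, hδ₀, fun δ _ hδ x hx y hy hxy => ?_⟩
  obtain ⟨_, ⟨i, rfl⟩, _, ⟨j, rfl⟩, hij, hclose⟩ := hnear δ hδ x hx y hy hxy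
  have hmax : max ‖x - u i‖ ‖y - u j‖ < B * δ :=
    (max_le_add_of_nonneg (norm_nonneg _) (norm_nonneg _)).trans_lt hclose
  have hne : i ≠ j := by
    rintro rfl
    rw [sub_self, norm_zero] at hij
    exact hD.ne hij
  rcases hne.lt_or_gt with hlt | hlt
  · exact ⟨i, j, hlt, hij, Or.inl hmax⟩
  · exact ⟨j, i, hlt, by rwa [norm_sub_rev], Or.inr (by rwa [max_comm])⟩

/-- near-diametrical points of a polygon are near diametrical
vertices. Let `u 1, …, u m` (`m ≥ 3`) be pairwise distinct points of the plane,
each an extreme point of `C := conv{u i}` (i.e. a point of `C` not lying in the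
open segment between any two distinct points of `C`). Then there are constants
`B, δ₀ ∈ (0,∞)` such that for every `δ ∈ (0, δ₀)` and all `x, y ∈ C` with
`‖x − y‖ > diam C − δ`, some diametrical pair `(i,j)` (with `i < j` and
`‖u i − u j‖ = diam C`) satisfies `max(‖x − u i‖, ‖y − u j‖) < Bδ` or
`max(‖y − u i‖, ‖x − u j‖) < Bδ`. -/
theorem near_diameter_points_near_diametrical_vertices
    (m : ℕ) (hm : 3 ≤ m)
    (u : Fin m → EuclideanSpace ℝ (Fin 2))
    (hinj : Function.Injective u)
    (C : Set (EuclideanSpace ℝ (Fin 2)))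
    (hC : C = convexHull ℝ (Set.range u))
    (hext : ∀ i : Fin m, u i ∈ C ∧
      ∀ y ∈ C, ∀ z ∈ C, y ≠ z → u i ∉ openSegment ℝ y z) :
    ∃ B δ₀ : ℝ, 0 < B ∧ 0 < δ₀ ∧
      ∀ δ : ℝ, 0 < δ → δ < δ₀ →
        ∀ x ∈ C, ∀ y ∈ C, Metric.diam C - δ < ‖x - y‖ →
          ∃ i j : Fin m, i < j ∧ ‖u i - u j‖ = Metric.diam C ∧
            (max ‖x - u i‖ ‖y - u j‖ < B * δ ∨
             max ‖y - u i‖ ‖x - u j‖ < B * δ) :=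
  near_diameter_points_near_diametrical_vertices_general m hm u hinj C hC
end
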